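/- arXiv:1702.07911 — 2 statements merged into one kernel-verified Lean document; each statement's English description precedes it below -/
import Mathlib

section
/- For every integer k ≥ 0, the polynomial T_{4k+2}(x) = ∑_{i=0}^{2k+1} (−1)^i x^{2i}/(2i)! is strictly decreasing on the interval (0, π/2). -/
/-!
The derivative of `T_{4k+2}` is `-S_{4k+1}`, where `S_{4k+1}` is the degree-`(4k+1)` Taylor
polynomial of `sin`. For `0 ≤ x ≤ √6` the terms `x^(2i+1)/(2i+1)!` of the sine series decrease,
so by the alternating series bound `S_{4k+1}(x) ≥ sin x`, which is positive on `(0, √6] ⊆ (0, π)`.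
-/

open Finset Nat

noncomputable def cosTaylor (n : ℕ) (x : ℝ) : ℝ :=
  ∑ i ∈ range n, (-1 : ℝ) ^ i * x ^ (2 * i) / (2 * i)!

noncomputable def sinTaylor (n : ℕ) (x : ℝ) : ℝ :=
  ∑ i ∈ range n, (-1 : ℝ) ^ i * x ^ (2 * i + 1) / (2 * i + 1)!

theorem hasDerivAt_cosTaylor_succ (n : ℕ) (x : ℝ) :
    HasDerivAt (cosTaylor (n + 1)) (-sinTaylor n x) x := by
  induction n with
  | zero =>
    have hone : cosTaylor 1 = fun _ => 1 := by funext; simp [cosTaylor]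
    simpa [hone, sinTaylor] using hasDerivAt_const x (1 : ℝ)
  | succ n ih =>
    have hterm : HasDerivAt (fun y : ℝ => (-1 : ℝ) ^ (n + 1) * y ^ (2 * (n + 1)) / (2 * (n + 1))!)
        (-((-1 : ℝ) ^ n * x ^ (2 * n + 1) / (2 * n + 1)!)) x := by
      refine (((hasDerivAt_pow (2 * (n + 1)) x).const_mul ((-1 : ℝ) ^ (n + 1))).div_const
        ((2 * (n + 1))! : ℝ)).congr_deriv ?_
      rw [show 2 * (n + 1) = 2 * n + 1 + 1 by ring, factorial_succ]
      push_cast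
      field_simp
      ring
    have hsucc : cosTaylor (n + 1 + 1) =
        fun y => cosTaylor (n + 1) y + (-1 : ℝ) ^ (n + 1) * y ^ (2 * (n + 1)) / (2 * (n + 1))! := by
      funext y; exact sum_range_succ _ _
    rw [hsucc, sinTaylor, sum_range_succ, neg_add]
    exact ih.add hterm

theorem antitone_pow_odd_div_factorial {x : ℝ} (hx : 0 ≤ x) (hx6 : x ^ 2 ≤ 6) :
    Antitone fun i : ℕ => x ^ (2 * i + 1) / (2 * i + 1)! := by
  refine antitone_nat_of_succ_le fun i => ?_
  have hratio : x ^ 2 ≤ (2 * i + 2) * (2 * i + 3) := by nlinarith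
  calc x ^ (2 * (i + 1) + 1) / (2 * (i + 1) + 1)!
      = x ^ (2 * i + 1) / (2 * i + 1)! * (x ^ 2 / ((2 * i + 2) * (2 * i + 3))) := by
        rw [show 2 * (i + 1) + 1 = 2 * i + 1 + 1 + 1 by ring, factorial_succ, factorial_succ,
          pow_succ, pow_succ]
        push_cast
        field_simp
        ring
    _ ≤ x ^ (2 * i + 1) / (2 * i + 1)! :=
        mul_le_of_le_one_right (by positivity) ((div_le_one (by positivity)).2 hratio)

theorem sin_le_sinTaylor {x : ℝ} (hx : 0 ≤ x) (hx6 : x ^ 2 ≤ 6) (k : ℕ) :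
    Real.sin x ≤ sinTaylor (2 * k + 1) x := by
  have h := (antitone_pow_odd_div_factorial hx hx6).tendsto_le_alternating_series
    (by simpa only [mul_div_assoc] using (Real.hasSum_sin x).tendsto_sum_nat) k
  simpa only [sinTaylor, mul_div_assoc] using h

theorem sinTaylor_pos {x : ℝ} (hx : 0 < x) (hx6 : x ^ 2 ≤ 6) (k : ℕ) :
    0 < sinTaylor (2 * k + 1) x := by
  have hxpi : x < Real.pi := by nlinarith [Real.pi_gt_three]
  exact (Real.sin_pos_of_pos_of_lt_pi hx hxpi).trans_le (sin_le_sinTaylor hx.le hx6 k)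

theorem cosTaylor_strictAntiOn (k : ℕ) :
    StrictAntiOn (cosTaylor (2 * k + 2)) (Set.Icc 0 (Real.sqrt 6)) := by
  refine strictAntiOn_of_hasDerivWithinAt_neg (convex_Icc _ _)
    (continuous_finsetSum _ fun i _ => by fun_prop).continuousOn
    (fun x _ => (hasDerivAt_cosTaylor_succ (2 * k + 1) x).hasDerivWithinAt) fun x hx => ?_
  rw [interior_Icc] at hx
  have hx6 : x ^ 2 ≤ 6 := by nlinarith [Real.sq_sqrt (show (0 : ℝ) ≤ 6 by norm_num), hx.1, hx.2]
  exact neg_neg_of_pos (sinTaylor_pos hx.1 hx6 k)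

theorem cos_taylor_strictAnti (k : ℕ) :
    StrictAntiOn (fun x : ℝ => ∑ i ∈ Finset.range (2 * k + 2), (-1 : ℝ) ^ i * x ^ (2 * i) / (Nat.factorial (2 * i)))
      (Set.Ioo 0 (Real.pi / 2)) := by
  have hpi : Real.pi / 2 ≤ Real.sqrt 6 := by
    rw [Real.le_sqrt (by positivity) (by norm_num)]
    nlinarith [Real.pi_lt_four, Real.pi_pos]
  exact (cosTaylor_strictAntiOn k).mono
    (Set.Ioo_subset_Icc_self.trans (Set.Icc_subset_Icc_right hpi))
end

section
/- Let k ≥ 0 be an integer, p ≥ 1 a positive integer, and let d_k ∈ (0, π/2) satisfy cos d_k = |T_{4k+2}(d_k)| with T_{4k+2}(d_k) < 0. Then (cos x)^{2p} > (T_{4k+2}(x))^{2p} for all x in (0, d_k), and (cos x)^{2p} < (T_{4k+2}(x))^{2p} for all x in (d_k, π/2). -/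
/-!
Put `F = cos + T`, where `T = cosPartialSum (2 * k + 2)` is `T_{4k+2}`. Then `F' = -(sin + S)` with
`S` the degree-`(4k+1)` Taylor polynomial of `sin`, and `S ≥ sin > 0` on `(0, π/2)` because `S` is an
odd partial sum of an alternating series with decreasing terms. So `F` is strictly decreasing on
`[0, π/2]` and vanishes at `d`: `-T < cos` before `d` and `-T > cos` after it. On the other hand
`T < cos` on `(0, 2)`, since the remainder `cos - T` is an alternating series, starting with a
positive term, whose terms decrease strictly. Hence `|T| < cos` on `(0, d)` and `cos < |T|` on
`(d, π/2)`, and the even power `2p` preserves both inequalities.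
-/

open Finset Filter Topology Real Nat

noncomputable def cosPartialSum (n : ℕ) (x : ℝ) : ℝ :=
  ∑ i ∈ range n, (-1) ^ i * x ^ (2 * i) / (2 * i)!

noncomputable def sinPartialSum (n : ℕ) (x : ℝ) : ℝ :=
  ∑ i ∈ range n, (-1) ^ i * (x ^ (2 * i + 1) / (2 * i + 1)!)

theorem pow_div_factorial_add_two_lt {x : ℝ} (hx : 0 < x) {n : ℕ}
    (h : x ^ 2 < (n + 1) * (n + 2)) : x ^ (n + 2) / (n + 2)! < x ^ n / n ! := by
  have hfact : ((n + 2)! : ℝ) = n ! * ((n + 1) * (n + 2)) := by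
    push_cast [Nat.factorial_succ]; ring
  rw [hfact, pow_add, mul_div_mul_comm]
  exact mul_lt_of_lt_one_right (by positivity) ((div_lt_one (by positivity)).2 h)

theorem strictAnti_pow_div_factorial_two_mul_add {x : ℝ} (hx : 0 < x) {r : ℕ}
    (h : x ^ 2 < (r + 1) * (r + 2)) :
    StrictAnti fun j : ℕ => x ^ (2 * j + r) / (2 * j + r)! := by
  refine strictAnti_nat_of_succ_lt fun j => ?_
  have hj : x ^ 2 < ((2 * j + r : ℕ) + 1) * ((2 * j + r : ℕ) + 2) := by
    refine h.trans_le ?_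
    push_cast
    gcongr <;> linarith [(j.cast_nonneg : (0 : ℝ) ≤ j)]
  simpa only [show 2 * (j + 1) + r = 2 * j + r + 2 by ring] using
    pow_div_factorial_add_two_lt hx hj

theorem StrictAnti.alternating_series_pos {f : ℕ → ℝ} {l : ℝ}
    (hfl : Tendsto (fun n => ∑ i ∈ range n, (-1) ^ i * f i) atTop (𝓝 l))
    (hfa : StrictAnti f) : 0 < l := by
  have h := hfa.antitone.alternating_series_le_tendsto hfl 1
  simp only [mul_one, sum_range_succ, range_zero, sum_empty] at h
  linarith [hfa zero_lt_one]

theorem sin_le_sinPartialSum {x : ℝ} (hx : 0 < x) (hx6 : x ^ 2 < 6) (m : ℕ) :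
    sin x ≤ sinPartialSum (2 * m + 1) x := by
  have hsin : Tendsto (fun n => ∑ i ∈ range n, (-1) ^ i * (x ^ (2 * i + 1) / (2 * i + 1)!))
      atTop (𝓝 (sin x)) := by
    simpa only [mul_div_assoc] using (hasSum_sin x).tendsto_sum_nat
  exact (strictAnti_pow_div_factorial_two_mul_add hx (r := 1) (by norm_num [hx6])).antitone
    |>.tendsto_le_alternating_series hsin m

theorem cosPartialSum_lt_cos {x : ℝ} (hx : 0 < x) {m : ℕ}
    (hxm : x ^ 2 < (4 * m + 1) * (4 * m + 2)) : cosPartialSum (2 * m) x < cos x := by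
  have htail := (hasSum_nat_add_iff (f := fun i => (-1) ^ i * x ^ (2 * i) / (2 * i)!) (2 * m)).2
    (by rw [← cosPartialSum, sub_add_cancel]; exact hasSum_cos x)
  have hterm : (fun n => (-1 : ℝ) ^ (n + 2 * m) * x ^ (2 * (n + 2 * m)) / (2 * (n + 2 * m))!) =
      fun n => (-1) ^ n * (x ^ (2 * n + 4 * m) / (2 * n + 4 * m)!) := by
    funext n
    rw [pow_add, pow_mul, neg_one_sq, one_pow, mul_one, mul_div_assoc,
      show 2 * (n + 2 * m) = 2 * n + 4 * m by ring]
  rw [hterm] at htail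
  have hanti := strictAnti_pow_div_factorial_two_mul_add hx (r := 4 * m) (by push_cast; linarith)
  linarith [hanti.alternating_series_pos htail.tendsto_sum_nat]

theorem hasDerivAt_pow_succ_div_factorial (n : ℕ) (x : ℝ) :
    HasDerivAt (fun y : ℝ => y ^ (n + 1) / (n + 1)!) (x ^ n / n !) x := by
  refine ((hasDerivAt_pow (n + 1) x).div_const ((n + 1)! : ℝ)).congr_deriv ?_
  rw [Nat.add_sub_cancel, Nat.factorial_succ, Nat.cast_mul, mul_div_mul_left _ _ (by positivity)]

theorem cosPartialSum_succ (n : ℕ) :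
    cosPartialSum (n + 1) =
      fun y => 1 - ∑ i ∈ range n, (-1 : ℝ) ^ i * (y ^ (2 * i + 1 + 1) / (2 * i + 1 + 1)!) := by
  funext y
  rw [cosPartialSum, sum_range_succ', sub_eq_neg_add, ← sum_neg_distrib]
  congr 1
  · refine sum_congr rfl fun i _ => ?_
    rw [show 2 * (i + 1) = 2 * i + 1 + 1 by ring, pow_succ]
    ring
  · simp

theorem hasDerivAt_cosPartialSum_succ (n : ℕ) (x : ℝ) :
    HasDerivAt (cosPartialSum (n + 1)) (-sinPartialSum n x) x := by
  rw [cosPartialSum_succ, sinPartialSum]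
  exact ((hasDerivAt_const x 1).fun_sub <| .fun_sum fun i _ =>
    (hasDerivAt_pow_succ_div_factorial (2 * i + 1) x).const_mul _).congr_deriv (zero_sub _)

theorem strictAntiOn_cos_add_cosPartialSum (m : ℕ) :
    StrictAntiOn (fun x => cos x + cosPartialSum (2 * m + 2) x) (Set.Icc 0 (π / 2)) := by
  have hderiv (x : ℝ) : HasDerivAt (fun x => cos x + cosPartialSum (2 * m + 2) x)
      (-sin x + -sinPartialSum (2 * m + 1) x) x :=
    (hasDerivAt_cos x).add (hasDerivAt_cosPartialSum_succ (2 * m + 1) x)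
  refine strictAntiOn_of_deriv_neg (convex_Icc _ _)
    (fun x _ => (hderiv x).continuousAt.continuousWithinAt) fun x hx => ?_
  rw [interior_Icc] at hx
  have hx2 : x < 2 := hx.2.trans (by linarith [pi_lt_four])
  have hsin_pos : 0 < sin x := sin_pos_of_pos_of_lt_pi hx.1 (by linarith [hx.2, pi_pos])
  have hsin_le := sin_le_sinPartialSum hx.1 (by nlinarith [hx.1]) m
  rw [(hderiv x).deriv]
  linarith

theorem abs_cosPartialSum_lt_cos {m : ℕ} {d : ℝ} (hd : d ∈ Set.Icc 0 (π / 2))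
    (hzero : cos d + cosPartialSum (2 * m + 2) d = 0) {x : ℝ} (hx : x ∈ Set.Ioo 0 d) :
    |cosPartialSum (2 * m + 2) x| < cos x := by
  have hpos := strictAntiOn_cos_add_cosPartialSum m ⟨hx.1.le, hx.2.le.trans hd.2⟩ hd hx.2
  have hx2 : x < 2 := hx.2.trans_le (hd.2.trans (by linarith [pi_lt_four]))
  have hlt : cosPartialSum (2 * (m + 1)) x < cos x :=
    cosPartialSum_lt_cos hx.1 (by push_cast; nlinarith [hx.1, (m.cast_nonneg : (0 : ℝ) ≤ m)])
  exact abs_lt.2 ⟨by linarith, hlt⟩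

theorem cos_lt_abs_cosPartialSum {m : ℕ} {d : ℝ} (hd : d ∈ Set.Icc 0 (π / 2))
    (hzero : cos d + cosPartialSum (2 * m + 2) d = 0) {x : ℝ} (hx : x ∈ Set.Ioo d (π / 2)) :
    cos x < |cosPartialSum (2 * m + 2) x| := by
  have hneg := strictAntiOn_cos_add_cosPartialSum m hd ⟨hd.1.trans hx.1.le, hx.2.le⟩ hx.1
  linarith [neg_le_abs (cosPartialSum (2 * m + 2) x)]

theorem cos_pow_compare (k : ℕ) (p : ℕ) (hp : 1 ≤ p) (d : ℝ)
    (hd : d ∈ Set.Ioo 0 (Real.pi / 2))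
    (hcos : Real.cos d = |∑ i ∈ Finset.range (2 * k + 2), (-1 : ℝ) ^ i * d ^ (2 * i) / (Nat.factorial (2 * i))|)
    (hneg : (∑ i ∈ Finset.range (2 * k + 2), (-1 : ℝ) ^ i * d ^ (2 * i) / (Nat.factorial (2 * i))) < 0) :
    (∀ x ∈ Set.Ioo 0 d,
      Real.cos x ^ (2 * p) >
        (∑ i ∈ Finset.range (2 * k + 2), (-1 : ℝ) ^ i * x ^ (2 * i) / (Nat.factorial (2 * i))) ^ (2 * p)) ∧
    (∀ x ∈ Set.Ioo d (Real.pi / 2),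
      Real.cos x ^ (2 * p) <
        (∑ i ∈ Finset.range (2 * k + 2), (-1 : ℝ) ^ i * x ^ (2 * i) / (Nat.factorial (2 * i))) ^ (2 * p)) := by
  have hd' : d ∈ Set.Icc 0 (π / 2) := Set.Ioo_subset_Icc_self hd
  have hzero : cos d + cosPartialSum (2 * k + 2) d = 0 := by
    rw [hcos, abs_of_neg hneg]
    exact neg_add_cancel _
  have hp' : 2 * p ≠ 0 := by omega
  refine ⟨fun x hx => ?_, fun x hx => ?_⟩
  · exact (pow_abs_two_mul _).symm.trans_lt <|
      pow_lt_pow_left₀ (abs_cosPartialSum_lt_cos hd' hzero hx) (abs_nonneg _) hp'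
  · have hcos_nonneg : 0 ≤ cos x :=
      cos_nonneg_of_mem_Icc ⟨by linarith [hd.1, hx.1, pi_pos], hx.2.le⟩
    exact (pow_lt_pow_left₀ (cos_lt_abs_cosPartialSum hd' hzero hx) hcos_nonneg hp').trans_eq
      (pow_abs_two_mul _)
end
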